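/- arXiv:2512.05473 — 3 statements merged into one kernel-verified Lean document; each statement's English description precedes it below -/
import Mathlib

section
/- Disagreement bound for quantized consensus: for all t ≥ 0, ‖tilde-z(t+1)‖_∞ ≤ √M·tilde-z^ini_max + L_z·M·‖W - I_M‖_∞/(2(1 - λ)), where tilde-z^ini_max := max_i ‖z_i(0) - z^avg‖_∞ and λ := ρ(W - (1/M)·1·1^T) < 1. -/
open Finset Kronecker
open scoped Matrix.Norms.L2Operator

noncomputable instance qcdbCSA (M : ℕ) [NeZero M] :
    CStarAlgebra (Matrix (Fin M) (Fin M) ℂ) :=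
  Matrix.instCStarAlgebra

/-- Euclidean contraction from spectrum bound for a symmetric real matrix. -/
lemma qcdb_contract (M : ℕ) (hM : 0 < M) (A : Matrix (Fin M) (Fin M) ℝ)
    (hA : A.IsSymm) (lam : ℝ) (hlam0 : 0 ≤ lam)
    (hspec : ∀ μ ∈ spectrum ℂ (A.map Complex.ofReal), ‖μ‖ ≤ lam)
    (v : Fin M → ℝ) :
    Real.sqrt (∑ i, (A.mulVec v) i ^ 2) ≤ lam * Real.sqrt (∑ i, v i ^ 2) := by
  haveI : NeZero M := ⟨hM.ne'⟩
  set Ac : Matrix (Fin M) (Fin M) ℂ := A.map Complex.ofReal with hAc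
  have hsa : IsSelfAdjoint Ac := by
    show star Ac = Ac
    ext i j
    simp only [Matrix.star_apply, hAc, Matrix.map_apply, Complex.star_def,
      Complex.conj_ofReal]
    have h := congrFun (congrFun hA i) j
    rw [Matrix.transpose_apply] at h
    exact_mod_cast h
  have hnorm : ‖Ac‖ ≤ lam := by
    have h1 : spectralRadius ℂ Ac = ‖Ac‖₊ := hsa.spectralRadius_eq_nnnorm
    have h2 : spectralRadius ℂ Ac ≤ (lam.toNNReal : ENNReal) := by
      refine iSup₂_le fun k hk => ?_
      have hkl : ‖k‖₊ ≤ lam.toNNReal := by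
        rw [← NNReal.coe_le_coe, coe_nnnorm, Real.coe_toNNReal lam hlam0]
        simpa using hspec k hk
      exact_mod_cast hkl
    rw [h1] at h2
    have h3 : ‖Ac‖₊ ≤ lam.toNNReal := by exact_mod_cast h2
    calc ‖Ac‖ = (‖Ac‖₊ : ℝ) := rfl
      _ ≤ (lam.toNNReal : ℝ) := NNReal.coe_le_coe.mpr h3
      _ = lam := Real.coe_toNNReal lam hlam0
  set vc : EuclideanSpace ℂ (Fin M) :=
    (WithLp.equiv 2 (Fin M → ℂ)).symm (fun i => (v i : ℂ)) with hvc
  have key := Ac.l2_opNorm_mulVec vc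
  have hmv : ∀ i, (Ac.mulVec vc) i = ((A.mulVec v) i : ℂ) := by
    intro i
    simp only [Matrix.mulVec, dotProduct, hAc, Matrix.map_apply, hvc]
    push_cast
    rfl
  have hLHS : ‖(EuclideanSpace.equiv (Fin M) ℂ).symm (Ac.mulVec vc)‖
      = Real.sqrt (∑ i, (A.mulVec v) i ^ 2) := by
    rw [EuclideanSpace.norm_eq]
    congr 1
    refine Finset.sum_congr rfl fun i _ => ?_
    have : ((EuclideanSpace.equiv (Fin M) ℂ).symm (Ac.mulVec vc)) i = (Ac.mulVec vc) i := rfl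
    rw [this, hmv i]
    simp [Complex.norm_real, sq_abs]
  have hRHS : ‖vc‖ = Real.sqrt (∑ i, v i ^ 2) := by
    rw [EuclideanSpace.norm_eq]
    congr 1
    refine Finset.sum_congr rfl fun i _ => ?_
    have : vc i = (v i : ℂ) := rfl
    rw [this]
    simp [Complex.norm_real, sq_abs]
  rw [hLHS, hRHS] at key
  calc Real.sqrt (∑ i, (A.mulVec v) i ^ 2) ≤ ‖Ac‖ * Real.sqrt (∑ i, v i ^ 2) := key
    _ ≤ lam * Real.sqrt (∑ i, v i ^ 2) :=
        mul_le_mul_of_nonneg_right hnorm (Real.sqrt_nonneg _)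

lemma qcdb_kron_mulVec (M p : ℕ) (A : Matrix (Fin M) (Fin M) ℝ)
    (z : Fin M × Fin p → ℝ) (i : Fin M) (k : Fin p) :
    ((A ⊗ₖ (1 : Matrix (Fin p) (Fin p) ℝ)).mulVec z) (i, k)
      = A.mulVec (fun j => z (j, k)) i := by
  simp only [Matrix.mulVec, dotProduct, Fintype.sum_prod_type,
    Matrix.kroneckerMap_apply, Matrix.one_apply, mul_ite, mul_one, mul_zero,
    ite_mul, zero_mul]
  refine Finset.sum_congr rfl fun j _ => ?_
  simp [Finset.sum_ite_eq' Finset.univ k (fun l => A i j * z (j, l))]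

set_option maxHeartbeats 1000000 in
/-- Disagreement bound for quantized consensus: for all `t ≥ 0`,
`‖z̃(t+1)‖_∞ ≤ √M·z̃max + L_z·M·‖W - I_M‖_∞ / (2(1-λ))`, where `z̃` follows the
disagreement recursion driven by a quantization error `e(t)` with `‖e(t)‖_∞ ≤ L_z/2`,
`λ < 1` bounds the moduli of the eigenvalues of `W - (1/M)𝟙𝟙ᵀ`, and
`‖W - I_M‖_∞` is the max row sum of absolute values. -/
theorem quantized_consensus_disagreement_bound (M p : ℕ) (hM : 0 < M)
    (W : Matrix (Fin M) (Fin M) ℝ) (hsymm : W.IsSymm)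
    (hrow : W.mulVec (fun _ => (1 : ℝ)) = fun _ => (1 : ℝ))
    (hcol : Matrix.vecMul (fun _ => (1 : ℝ)) W = fun _ => (1 : ℝ))
    (lam : ℝ) (hlam0 : 0 ≤ lam) (hlam1 : lam < 1)
    (hspec : ∀ μ ∈ spectrum ℂ
      ((W - ((M : ℝ))⁻¹ • Matrix.of (fun _ _ : Fin M => (1 : ℝ))).map Complex.ofReal),
      ‖μ‖ ≤ lam)
    (Lz : ℝ) (hLz : 0 < Lz)
    (ztil : ℕ → Fin M × Fin p → ℝ) (e : ℕ → Fin M × Fin p → ℝ)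
    (he : ∀ t, ‖e t‖ ≤ Lz / 2)
    (hdyn : ∀ t, ztil (t + 1) =
      ((W - ((M : ℝ))⁻¹ • Matrix.of (fun _ _ : Fin M => (1 : ℝ))) ⊗ₖ
        (1 : Matrix (Fin p) (Fin p) ℝ)).mulVec (ztil t) +
      ((W - 1) ⊗ₖ (1 : Matrix (Fin p) (Fin p) ℝ)).mulVec (e t))
    (zmax : ℝ)
    (hzmax : zmax = Finset.univ.sup' ⟨⟨0, hM⟩, Finset.mem_univ _⟩
      (fun i : Fin M => ‖(fun k => ztil 0 (i, k) : Fin p → ℝ)‖))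
    (nWI : ℝ)
    (hnWI : nWI = Finset.univ.sup' ⟨⟨0, hM⟩, Finset.mem_univ _⟩
      (fun i : Fin M => ∑ j : Fin M, |(W - 1) i j|)) :
    ∀ t : ℕ, ‖ztil (t + 1)‖ ≤
      Real.sqrt M * zmax + Lz * M * nWI / (2 * (1 - lam)) := by
  haveI : NeZero M := ⟨hM.ne'⟩
  set A : Matrix (Fin M) (Fin M) ℝ :=
    W - ((M : ℝ))⁻¹ • Matrix.of (fun _ _ : Fin M => (1 : ℝ)) with hAdef
  set B : Matrix (Fin M) (Fin M) ℝ := W - 1 with hBdef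
  have hAsymm : A.IsSymm := by
    show A.transpose = A
    rw [hAdef, Matrix.transpose_sub, Matrix.transpose_smul, hsymm]
    rfl
  have h1lam : (0:ℝ) < 1 - lam := by linarith
  set E : (Fin M → ℝ) → ℝ := fun v => Real.sqrt (∑ i, v i ^ 2) with hEdef
  have hE0 : ∀ v, 0 ≤ E v := fun v => Real.sqrt_nonneg _
  have hEcoord : ∀ (v : Fin M → ℝ) (i : Fin M), |v i| ≤ E v := by
    intro v i
    rw [hEdef]
    have h1 : v i ^ 2 ≤ ∑ j, v j ^ 2 :=
      Finset.single_le_sum (fun j _ => sq_nonneg (v j)) (Finset.mem_univ i)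
    calc |v i| = Real.sqrt (v i ^ 2) := (Real.sqrt_sq_eq_abs _).symm
      _ ≤ _ := Real.sqrt_le_sqrt h1
  have hEmax : ∀ (v : Fin M → ℝ) (C : ℝ), 0 ≤ C → (∀ i, |v i| ≤ C) →
      E v ≤ Real.sqrt M * C := by
    intro v C hC h
    rw [hEdef, ← Real.sqrt_sq hC, ← Real.sqrt_mul (Nat.cast_nonneg M)]
    apply Real.sqrt_le_sqrt
    calc ∑ i, v i ^ 2 ≤ ∑ _i : Fin M, C ^ 2 := by
          refine Finset.sum_le_sum fun i _ => ?_
          calc v i ^ 2 = |v i| ^ 2 := (sq_abs _).symm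
            _ ≤ C ^ 2 := by nlinarith [h i, abs_nonneg (v i)]
      _ = M * C ^ 2 := by simp [mul_comm]
  have hEeq : ∀ w : Fin M → ℝ, E w = ‖(WithLp.equiv 2 (Fin M → ℝ)).symm w‖ := by
    intro w
    rw [hEdef, EuclideanSpace.norm_eq]
    simp [WithLp.equiv_symm_apply, Real.norm_eq_abs, sq_abs]
  have hEadd : ∀ u v : Fin M → ℝ, E (u + v) ≤ E u + E v := by
    intro u v
    rw [hEeq, hEeq, hEeq]
    exact norm_add_le ((WithLp.equiv 2 (Fin M → ℝ)).symm u)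
      ((WithLp.equiv 2 (Fin M → ℝ)).symm v)
  have hcontract : ∀ v : Fin M → ℝ, E (A.mulVec v) ≤ lam * E v :=
    fun v => qcdb_contract M hM A hAsymm lam hlam0 hspec v
  have hzmax0 : 0 ≤ zmax := by
    rw [hzmax]
    exact le_trans (norm_nonneg ((fun k => ztil 0 ((⟨0, hM⟩ : Fin M), k)) : Fin p → ℝ))
      (Finset.le_sup' (f := fun i : Fin M => ‖(fun k => ztil 0 (i, k) : Fin p → ℝ)‖)
        (Finset.mem_univ (⟨0, hM⟩ : Fin M)))
  have hnWI0 : 0 ≤ nWI := by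
    rw [hnWI]
    exact le_trans (Finset.sum_nonneg fun j _ => abs_nonneg (B (⟨0, hM⟩ : Fin M) j))
      (Finset.le_sup' (f := fun i : Fin M => ∑ j : Fin M, |B i j|)
        (Finset.mem_univ (⟨0, hM⟩ : Fin M)))
  set D : ℝ := Real.sqrt M * (nWI * (Lz / 2)) with hDdef
  have hD0 : 0 ≤ D := by positivity
  have hBe : ∀ t (k : Fin p), E (B.mulVec (fun j => e t (j, k))) ≤ D := by
    intro t k
    refine hEmax _ _ (by positivity) fun i => ?_
    have hrowsum : ∑ j, |B i j| ≤ nWI := by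
      rw [hnWI]
      exact Finset.le_sup' (f := fun i : Fin M => ∑ j : Fin M, |B i j|) (Finset.mem_univ i)
    calc |B.mulVec (fun j => e t (j, k)) i| = |∑ j, B i j * e t (j, k)| := rfl
      _ ≤ ∑ j, |B i j * e t (j, k)| := Finset.abs_sum_le_sum_abs _ _
      _ ≤ ∑ j, |B i j| * (Lz / 2) := by
          refine Finset.sum_le_sum fun j _ => ?_
          rw [abs_mul]
          refine mul_le_mul_of_nonneg_left ?_ (abs_nonneg _)
          calc |e t (j, k)| = ‖e t (j, k)‖ := rfl
            _ ≤ ‖e t‖ := norm_le_pi_norm (e t) (j, k)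
            _ ≤ Lz / 2 := he t
      _ = (∑ j, |B i j|) * (Lz / 2) := by rw [← Finset.sum_mul]
      _ ≤ nWI * (Lz / 2) := by
          refine mul_le_mul_of_nonneg_right hrowsum (by positivity)
  have hcolrec : ∀ t (k : Fin p) (i : Fin M),
      ztil (t + 1) (i, k)
        = (A.mulVec (fun j => ztil t (j, k)) + B.mulVec (fun j => e t (j, k))) i := by
    intro t k i
    have := congrFun (hdyn t) (i, k)
    rw [this]
    simp only [Pi.add_apply]
    rw [qcdb_kron_mulVec, qcdb_kron_mulVec]
  have key : ∀ t (k : Fin p), E (fun i => ztil t (i, k))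
      ≤ lam ^ t * E (fun i => ztil 0 (i, k)) + (∑ s ∈ Finset.range t, lam ^ s) * D := by
    intro t
    induction t with
    | zero => intro k; simp
    | succ t ih =>
      intro k
      have hdec : (fun i => ztil (t + 1) (i, k))
          = A.mulVec (fun j => ztil t (j, k)) + B.mulVec (fun j => e t (j, k)) :=
        funext fun i => hcolrec t k i
      have hS : (∑ s ∈ Finset.range (t + 1), lam ^ s)
          = 1 + lam * ∑ s ∈ Finset.range t, lam ^ s := by
        rw [_root_.geom_sum_succ]
        ring
      calc E (fun i => ztil (t + 1) (i, k))
          ≤ E (A.mulVec (fun j => ztil t (j, k))) + E (B.mulVec (fun j => e t (j, k))) := by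
            rw [hdec]; exact hEadd _ _
        _ ≤ lam * E (fun j => ztil t (j, k)) + D := by
            exact add_le_add (hcontract _) (hBe t k)
        _ ≤ lam * (lam ^ t * E (fun i => ztil 0 (i, k))
              + (∑ s ∈ Finset.range t, lam ^ s) * D) + D :=
            add_le_add_left (mul_le_mul_of_nonneg_left (ih k) hlam0) D
        _ = lam ^ (t + 1) * E (fun i => ztil 0 (i, k))
              + (∑ s ∈ Finset.range (t + 1), lam ^ s) * D := by
            rw [hS]; ring
  have hgeom : ∀ t : ℕ, (∑ s ∈ Finset.range t, lam ^ s) ≤ 1 / (1 - lam) := by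
    intro t
    rw [le_div_iff₀ h1lam]
    have := geom_sum_mul lam t
    have hpow : 0 ≤ lam ^ t := pow_nonneg hlam0 t
    nlinarith [this]
  have hcol0 : ∀ k : Fin p, E (fun i => ztil 0 (i, k)) ≤ Real.sqrt M * zmax := by
    intro k
    refine hEmax _ _ hzmax0 fun i => ?_
    calc |ztil 0 (i, k)| = ‖ztil 0 (i, k)‖ := rfl
      _ ≤ ‖(fun k => ztil 0 (i, k) : Fin p → ℝ)‖ := norm_le_pi_norm (fun k => ztil 0 (i, k)) k
      _ ≤ zmax := hzmax ▸ Finset.le_sup'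
            (f := fun i : Fin M => ‖(fun k => ztil 0 (i, k) : Fin p → ℝ)‖) (Finset.mem_univ i)
  have hsqrtM : Real.sqrt M ≤ M := by
    have hM1 : (1:ℝ) ≤ M := by exact_mod_cast hM
    have hs : Real.sqrt M ^ 2 = M := Real.sq_sqrt (by positivity)
    nlinarith [Real.sqrt_nonneg (M:ℝ), sq_nonneg (Real.sqrt M - 1)]
  intro t
  have hRHS0 : 0 ≤ Real.sqrt M * zmax + Lz * M * nWI / (2 * (1 - lam)) := by positivity
  rw [pi_norm_le_iff_of_nonneg hRHS0]
  rintro ⟨i, k⟩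
  have h1 : ‖ztil (t + 1) (i, k)‖ = |ztil (t + 1) (i, k)| := rfl
  rw [h1]
  have h2 : |ztil (t + 1) (i, k)| ≤ E (fun i => ztil (t + 1) (i, k)) := hEcoord (fun i => ztil (t + 1) (i, k)) i
  have h3 := key (t + 1) k
  have h4 : lam ^ (t + 1) * E (fun i => ztil 0 (i, k)) ≤ Real.sqrt M * zmax := by
    calc lam ^ (t + 1) * E (fun i => ztil 0 (i, k))
        ≤ 1 * E (fun i => ztil 0 (i, k)) :=
          mul_le_mul_of_nonneg_right (pow_le_one₀ hlam0 hlam1.le) (hE0 _)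
      _ = E (fun i => ztil 0 (i, k)) := one_mul _
      _ ≤ Real.sqrt M * zmax := hcol0 k
  have h5 : (∑ s ∈ Finset.range (t + 1), lam ^ s) * D
      ≤ Lz * M * nWI / (2 * (1 - lam)) := by
    have hg := hgeom (t + 1)
    have hSum0 : 0 ≤ ∑ s ∈ Finset.range (t + 1), lam ^ s :=
      Finset.sum_nonneg fun s _ => pow_nonneg hlam0 s
    have hDle : D ≤ M * (nWI * (Lz / 2)) := by
      rw [hDdef]
      exact mul_le_mul_of_nonneg_right hsqrtM (by positivity)
    calc (∑ s ∈ Finset.range (t + 1), lam ^ s) * D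
        ≤ (1 / (1 - lam)) * D := mul_le_mul_of_nonneg_right hg hD0
      _ ≤ (1 / (1 - lam)) * (M * (nWI * (Lz / 2))) :=
          mul_le_mul_of_nonneg_left hDle (by positivity)
      _ = Lz * M * nWI / (2 * (1 - lam)) := by
          field_simp
  linarith [h2, h3, h4, h5]
end

section
/- Overflow-freeness of the secure consensus update: under the modulus bound q > (M/(2L_w))·(1 + M‖W - I_M‖_∞/(1 - λ) + 2(√M·tilde-z^ini_max + ‖z^avg‖_∞)/L_z), for all t ≥ 0 and all agents i, ‖sum_{j ∈ N_i} (w_{ij}/L_w)·(Q(z_j(t)) - Q(z_i(t)))‖_∞ < q/2. -/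
open Finset
open Matrix

section AuxLemmas

open Matrix

variable {V : Type*} [Fintype V] [DecidableEq V]

/-- helper: metropolisWeight is nonneg -/
private lemma mw_nonneg' (G : SimpleGraph V) [DecidableRel G.Adj] (i j : V) :
    0 ≤ (1 : ℝ) / (2 * (1 + (max (G.degree i) (G.degree j) : ℝ))) := by positivity

private lemma euclid_coord_le {n : ℕ} (x : EuclideanSpace ℝ (Fin n)) (i : Fin n) :
    |x i| ≤ ‖x‖ := by
  have h1 : |x i| = Real.sqrt (‖x i‖ ^ 2) := by
    rw [Real.sqrt_sq (norm_nonneg _), Real.norm_eq_abs]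
  rw [EuclideanSpace.norm_eq, h1]
  exact Real.sqrt_le_sqrt (Finset.single_le_sum (fun j _ => sq_nonneg ‖x j‖) (Finset.mem_univ i))

private lemma euclid_norm_le_sqrt_mul {n : ℕ} (f : Fin n → ℝ) {c : ℝ} (hc : 0 ≤ c)
    (h : ∀ i, |f i| ≤ c) :
    ‖(EuclideanSpace.equiv (Fin n) ℝ).symm f‖ ≤ Real.sqrt n * c := by
  rw [EuclideanSpace.norm_eq]
  have h1 : ∑ i, ‖((EuclideanSpace.equiv (Fin n) ℝ).symm f) i‖ ^ 2 ≤ (n : ℝ) * c ^ 2 := by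
    calc ∑ i, ‖((EuclideanSpace.equiv (Fin n) ℝ).symm f) i‖ ^ 2
        ≤ ∑ _i : Fin n, c ^ 2 := by
          refine Finset.sum_le_sum fun i _ => ?_
          have h2 : ‖((EuclideanSpace.equiv (Fin n) ℝ).symm f) i‖ = |f i| := by
            simp [Real.norm_eq_abs]
          rw [h2]
          have := h i
          nlinarith [abs_nonneg (f i)]
      _ = (n : ℝ) * c ^ 2 := by
          rw [Finset.sum_const, Finset.card_univ, Fintype.card_fin, nsmul_eq_mul]
  calc Real.sqrt (∑ i, ‖((EuclideanSpace.equiv (Fin n) ℝ).symm f) i‖ ^ 2)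
      ≤ Real.sqrt ((n : ℝ) * c ^ 2) := Real.sqrt_le_sqrt h1
    _ = Real.sqrt n * c := by
        rw [Real.sqrt_mul (Nat.cast_nonneg n), Real.sqrt_sq hc]

open scoped Matrix.Norms.L2Operator in
private lemma aux_mulVec_norm_le {M : ℕ} (A : Matrix (Fin M) (Fin M) ℝ)
    (hA : A.IsSymm) {lam : ℝ} (hlam0 : 0 ≤ lam)
    (hspec : ∀ μ ∈ spectrum ℂ (A.map Complex.ofReal), ‖μ‖ ≤ lam)
    (v : Fin M → ℝ) :
    ‖(EuclideanSpace.equiv (Fin M) ℝ).symm (A *ᵥ v)‖ ≤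
      lam * ‖(EuclideanSpace.equiv (Fin M) ℝ).symm v‖ := by
  set B : Matrix (Fin M) (Fin M) ℂ := A.map Complex.ofReal with hBdef
  have hB : IsSelfAdjoint B := by
    show Bᴴ = B
    ext i j
    have h : A j i = A i j := hA.apply i j
    simp [hBdef, Matrix.conjTranspose_apply, Complex.conj_ofReal, h]
  letI : CStarAlgebra (Matrix (Fin M) (Fin M) ℂ) :=
    Matrix.instCStarAlgebra
  have h2 : ‖B‖ ≤ lam := by
    have h1 : spectralRadius ℂ B ≤ ENNReal.ofReal lam := by
      refine iSup₂_le fun μ hμ => ?_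
      rw [← enorm_eq_nnnorm, ← ofReal_norm]
      exact ENNReal.ofReal_le_ofReal (hspec μ hμ)
    rw [hB.spectralRadius_eq_nnnorm, ← enorm_eq_nnnorm, ← ofReal_norm,
      ENNReal.ofReal_le_ofReal_iff hlam0] at h1
    exact h1
  have h3 := B.l2_opNorm_mulVec ((EuclideanSpace.equiv (Fin M) ℂ).symm (fun i => (v i : ℂ)))
  have e1 : ‖(EuclideanSpace.equiv (Fin M) ℂ).symm
        (B *ᵥ ((EuclideanSpace.equiv (Fin M) ℂ).symm (fun i => (v i : ℂ)) : Fin M → ℂ))‖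
      = ‖(EuclideanSpace.equiv (Fin M) ℝ).symm (A *ᵥ v)‖ := by
    rw [EuclideanSpace.norm_eq, EuclideanSpace.norm_eq]
    congr 1
    refine Finset.sum_congr rfl fun i _ => ?_
    congr 1
    show ‖(B *ᵥ (fun i => (v i : ℂ))) i‖ = ‖(A *ᵥ v) i‖
    have h4 : (B *ᵥ (fun i => (v i : ℂ))) i = (((A *ᵥ v) i : ℝ) : ℂ) := by
      simp [hBdef, Matrix.mulVec, dotProduct, Matrix.map_apply]
    rw [h4, Complex.norm_real]
  have e2 : ‖(EuclideanSpace.equiv (Fin M) ℂ).symm (fun i => (v i : ℂ))‖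
      = ‖(EuclideanSpace.equiv (Fin M) ℝ).symm v‖ := by
    rw [EuclideanSpace.norm_eq, EuclideanSpace.norm_eq]
    congr 1
    exact Finset.sum_congr rfl fun i _ => by simp [Complex.norm_real]
  rw [e1, e2] at h3
  calc ‖(EuclideanSpace.equiv (Fin M) ℝ).symm (A *ᵥ v)‖
      ≤ ‖B‖ * ‖(EuclideanSpace.equiv (Fin M) ℝ).symm v‖ := h3
    _ ≤ lam * ‖(EuclideanSpace.equiv (Fin M) ℝ).symm v‖ :=
        mul_le_mul_of_nonneg_right h2 (norm_nonneg _)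

end AuxLemmas


/-- Metropolis weight `w_{ij} = 1/(2(1 + max{|N_i|, |N_j|}))`. -/
noncomputable def metropolisWeight {V : Type*} [Fintype V]
    (G : SimpleGraph V) [DecidableRel G.Adj] (i j : V) : ℝ :=
  1 / (2 * (1 + (max (G.degree i) (G.degree j) : ℝ)))

/-- The Metropolis weight matrix. -/
noncomputable def metropolisMatrix {V : Type*} [Fintype V] [DecidableEq V]
    (G : SimpleGraph V) [DecidableRel G.Adj] : Matrix V V ℝ :=
  Matrix.of fun i j =>
    if G.Adj i j then metropolisWeight G i j
    else if i = j then 1 - ∑ k ∈ G.neighborFinset i, metropolisWeight G i k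
    else 0

section MM

variable {V : Type*} [Fintype V] [DecidableEq V] (G : SimpleGraph V) [DecidableRel G.Adj]

private lemma mw_nonneg (i j : V) : 0 ≤ metropolisWeight G i j := by
  unfold metropolisWeight
  positivity

private lemma mw_le (i j : V) :
    metropolisWeight G i j ≤ 1 / (2 * (1 + (G.degree i : ℝ))) := by
  unfold metropolisWeight
  apply one_div_le_one_div_of_le
  · positivity
  · have h1 : (G.degree i : ℝ) ≤ (G.degree i : ℝ) ⊔ (G.degree j : ℝ) := le_max_left _ _
    linarith

private lemma mm_row (i : V) (v : V → ℝ) :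
    ∑ j, metropolisMatrix G i j * v j
      = (∑ j ∈ G.neighborFinset i, metropolisWeight G i j * v j)
        + (1 - ∑ j ∈ G.neighborFinset i, metropolisWeight G i j) * v i := by
  rw [← Finset.sum_filter_add_sum_filter_not Finset.univ (fun j => G.Adj i j)]
  congr 1
  · rw [SimpleGraph.neighborFinset_eq_filter]
    refine Finset.sum_congr rfl fun j hj => ?_
    rw [Finset.mem_filter] at hj
    simp [metropolisMatrix, hj.2]
  · rw [Finset.sum_eq_single i]
    · simp [metropolisMatrix, G.irrefl]
    · intro j hj hne
      rw [Finset.mem_filter] at hj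
      simp [metropolisMatrix, hj.2, (Ne.symm hne : i ≠ j)]
    · intro h
      exact absurd (Finset.mem_filter.mpr ⟨Finset.mem_univ i, G.irrefl⟩) h

private lemma mm_rowsum (i : V) : ∑ j, metropolisMatrix G i j = 1 := by
  have := mm_row G i (fun _ => 1)
  simpa using this

private lemma mm_consensus (i : V) (v : V → ℝ) :
    ∑ j ∈ G.neighborFinset i, metropolisWeight G i j * (v j - v i)
      = (∑ j, metropolisMatrix G i j * v j) - v i := by
  rw [mm_row]
  rw [Finset.sum_congr rfl (fun j _ => mul_sub (metropolisWeight G i j) (v j) (v i)),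
    Finset.sum_sub_distrib, ← Finset.sum_mul]
  ring

private lemma mm_symm' (i j : V) : metropolisMatrix G i j = metropolisMatrix G j i := by
  have hw : metropolisWeight G i j = metropolisWeight G j i := by
    unfold metropolisWeight; rw [max_comm]
  by_cases h : G.Adj i j
  · simp [metropolisMatrix, h, h.symm, hw]
  · have h' : ¬ G.Adj j i := fun hc => h hc.symm
    by_cases hij : i = j
    · subst hij; rfl
    · simp [metropolisMatrix, h, h', hij, Ne.symm hij]

private lemma mm_colsum (j : V) : ∑ i, metropolisMatrix G i j = 1 := by
  rw [Finset.sum_congr rfl fun i _ => mm_symm' G i j]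
  exact mm_rowsum G j

end MM

set_option maxHeartbeats 3200000 in
/-- Overflow-freeness of the secure consensus update: under the modulus bound
`q > (M/(2L_w))·(1 + M‖W - I‖_∞/(1-λ) + 2(√M·z̃max + ‖z^avg‖_∞)/L_z)`, the quantized
Metropolis consensus satisfies
`‖∑_{j∈N_i} (w_{ij}/L_w)(Q(z_j(t)) - Q(z_i(t)))‖_∞ < q/2` for all `t` and `i`. -/
theorem secure_consensus_no_overflow (M p q : ℕ) (hM : 0 < M)
    (G : SimpleGraph (Fin M)) [DecidableRel G.Adj]
    (Lz Lw : ℝ) (hLz : 0 < Lz) (hLw : 0 < Lw)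
    (hint : ∀ i j, G.Adj i j → ∃ n : ℤ, metropolisWeight G i j / Lw = (n : ℝ))
    (z : ℕ → Fin M → Fin p → ℝ)
    (hdyn : ∀ t i k, z (t + 1) i k = z t i k +
      Lz * ∑ j ∈ G.neighborFinset i, metropolisWeight G i j *
        ((round (z t j k / Lz) : ℝ) - (round (z t i k / Lz) : ℝ)))
    (zavg : Fin p → ℝ)
    (hzavg : zavg = fun k => (1 / (M : ℝ)) * ∑ i : Fin M, z 0 i k)
    (zmax : ℝ)
    (hzmax : zmax = Finset.univ.sup' ⟨⟨0, hM⟩, Finset.mem_univ _⟩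
      (fun i : Fin M => ‖(fun k => z 0 i k - zavg k : Fin p → ℝ)‖))
    (nWI : ℝ)
    (hnWI : nWI = Finset.univ.sup' ⟨⟨0, hM⟩, Finset.mem_univ _⟩
      (fun i : Fin M => ∑ j : Fin M, |(metropolisMatrix G - 1) i j|))
    (lam : ℝ) (hlam0 : 0 ≤ lam) (hlam1 : lam < 1)
    (hspec : ∀ μ ∈ spectrum ℂ
      ((metropolisMatrix G - ((M : ℝ))⁻¹ •
        Matrix.of (fun _ _ : Fin M => (1 : ℝ))).map Complex.ofReal),
      ‖μ‖ ≤ lam)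
    (hq : (q : ℝ) > (M / (2 * Lw)) *
      (1 + (M : ℝ) * nWI / (1 - lam) + 2 * (Real.sqrt M * zmax + ‖zavg‖) / Lz)) :
    ∀ (t : ℕ) (i : Fin M) (k : Fin p),
      |∑ j ∈ G.neighborFinset i, (metropolisWeight G i j / Lw) *
        ((round (z t j k / Lz) : ℝ) - (round (z t i k / Lz) : ℝ))| < (q : ℝ) / 2 := by
  have hM1 : (1 : ℝ) ≤ (M : ℝ) := by exact_mod_cast hM
  have hM0 : (M : ℝ) ≠ 0 := by positivity
  have hlamlt : 0 < 1 - lam := by linarith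
  have hzmax0 : 0 ≤ zmax := by
    rw [hzmax]
    refine le_trans (norm_nonneg ((fun k => z 0 (⟨0, hM⟩ : Fin M) k - zavg k : Fin p → ℝ))) ?_
    exact Finset.le_sup' (fun i : Fin M => ‖(fun k => z 0 i k - zavg k : Fin p → ℝ)‖)
      (Finset.mem_univ (⟨0, hM⟩ : Fin M))
  have hnWI0 : 0 ≤ nWI := by
    rw [hnWI]
    refine le_trans (Finset.sum_nonneg fun j (_ : j ∈ Finset.univ) =>
      abs_nonneg ((metropolisMatrix G - 1) (⟨0, hM⟩ : Fin M) j)) ?_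
    exact Finset.le_sup' (fun i : Fin M => ∑ j : Fin M, |(metropolisMatrix G - 1) i j|)
      (Finset.mem_univ (⟨0, hM⟩ : Fin M))
  have hsqrtM0 : 0 ≤ Real.sqrt M := Real.sqrt_nonneg _
  have hsqrtM : Real.sqrt M ≤ (M : ℝ) := by
    have h1 : (M : ℝ) ≤ (M : ℝ) ^ 2 := by nlinarith
    calc Real.sqrt M ≤ Real.sqrt ((M : ℝ) ^ 2) := Real.sqrt_le_sqrt h1
      _ = (M : ℝ) := Real.sqrt_sq (by positivity)
  set A : Matrix (Fin M) (Fin M) ℝ :=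
    metropolisMatrix G - ((M : ℝ))⁻¹ • Matrix.of (fun _ _ : Fin M => (1 : ℝ)) with hA
  have hAsymm : A.IsSymm := by
    show Aᵀ = A
    ext i j
    simp [hA, Matrix.transpose_apply, Matrix.sub_apply, Matrix.smul_apply, mm_symm' G j i]
  set c : ℝ := Lz * nWI / 2 with hc
  have hc0 : 0 ≤ c := by rw [hc]; positivity
  set K : ℝ := Real.sqrt M * zmax + Real.sqrt M * c / (1 - lam) with hK
  have hK0 : 0 ≤ K := by
    rw [hK]; positivity
  intro t i k
  set m : ℝ := zavg k with hm
  -- quantization values and errors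
  set Qv : ℕ → Fin M → ℝ := fun s j => ((round (z s j k / Lz) : ℤ) : ℝ) with hQv
  set ev : ℕ → Fin M → ℝ := fun s j => Qv s j - z s j k / Lz with hev
  have hev2 : ∀ s j, |ev s j| ≤ 1 / 2 := by
    intro s j
    have h1 : ev s j = -(z s j k / Lz - (round (z s j k / Lz) : ℝ)) := by
      rw [hev]; ring
    rw [h1, abs_neg]
    exact abs_sub_round _
  have hfold : ∀ s j, ((round (z s j k / Lz) : ℤ) : ℝ) = Qv s j := fun s j => rfl
  -- dynamics in matrix form
  have hstep : ∀ s i', z (s + 1) i' k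
      = (∑ j, metropolisMatrix G i' j * z s j k)
        + Lz * ((∑ j, metropolisMatrix G i' j * ev s j) - ev s i') := by
    intro s i'
    have h1 := hdyn s i' k
    simp only [hfold] at h1
    rw [mm_consensus G i' (Qv s)] at h1
    have h3 : ∀ j, Qv s j = z s j k / Lz + ev s j := fun j => by rw [hev]; ring
    rw [h1]
    rw [Finset.sum_congr rfl fun j _ => by rw [h3 j]]
    rw [Finset.sum_congr rfl fun j _ =>
      mul_add (metropolisMatrix G i' j) (z s j k / Lz) (ev s j)]
    rw [Finset.sum_add_distrib, h3 i']
    have h4 : ∑ j, metropolisMatrix G i' j * (z s j k / Lz)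
        = (∑ j, metropolisMatrix G i' j * z s j k) / Lz := by
      rw [Finset.sum_div]
      exact Finset.sum_congr rfl fun j _ => (mul_div_assoc _ _ _).symm
    rw [h4]
    field_simp
    ring
  -- sum invariance
  have hsum : ∀ s, ∑ j, z s j k = ∑ j, z 0 j k := by
    intro s
    induction s with
    | zero => rfl
    | succ n ih =>
      have hA1 : ∑ i', ∑ j, metropolisMatrix G i' j * z n j k = ∑ j, z n j k := by
        rw [Finset.sum_comm]
        refine Finset.sum_congr rfl fun j _ => ?_
        rw [← Finset.sum_mul, mm_colsum, one_mul]
      have hA2 : ∑ i', ∑ j, metropolisMatrix G i' j * ev n j = ∑ i', ev n i' := by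
        rw [Finset.sum_comm]
        refine Finset.sum_congr rfl fun j _ => ?_
        rw [← Finset.sum_mul, mm_colsum, one_mul]
      calc ∑ j, z (n + 1) j k
          = ∑ i', ((∑ j, metropolisMatrix G i' j * z n j k)
            + Lz * ((∑ j, metropolisMatrix G i' j * ev n j) - ev n i')) :=
            Finset.sum_congr rfl fun i' _ => hstep n i'
        _ = (∑ i', ∑ j, metropolisMatrix G i' j * z n j k)
            + Lz * ((∑ i', ∑ j, metropolisMatrix G i' j * ev n j) - ∑ i', ev n i') := by
            rw [Finset.sum_add_distrib, ← Finset.mul_sum, Finset.sum_sub_distrib]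
        _ = ∑ j, z n j k := by rw [hA1, hA2, sub_self, mul_zero, add_zero]
        _ = ∑ j, z 0 j k := ih
  have hmean : ∀ s, ∑ j, (z s j k - m) = 0 := by
    intro s
    rw [Finset.sum_sub_distrib, hsum s, Finset.sum_const, Finset.card_univ, Fintype.card_fin,
      nsmul_eq_mul, hm, hzavg]
    field_simp
    ring
  -- disagreement vector
  set Y : ℕ → EuclideanSpace ℝ (Fin M) :=
    fun s => (EuclideanSpace.equiv (Fin M) ℝ).symm (fun j => z s j k - m) with hY
  have hYrec : ∀ s, Y (s + 1)
      = (EuclideanSpace.equiv (Fin M) ℝ).symm (A *ᵥ (fun j => z s j k - m))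
        + (EuclideanSpace.equiv (Fin M) ℝ).symm
          (fun i' => Lz * ((∑ j, metropolisMatrix G i' j * ev s j) - ev s i')) := by
    intro s
    ext i'
    show z (s + 1) i' k - m
      = (A *ᵥ (fun j => z s j k - m)) i'
        + Lz * ((∑ j, metropolisMatrix G i' j * ev s j) - ev s i')
    have h1 : (A *ᵥ (fun j => z s j k - m)) i'
        = (∑ j, metropolisMatrix G i' j * (z s j k - m))
          - (M : ℝ)⁻¹ * ∑ j, (z s j k - m) := by
      simp only [hA, Matrix.mulVec, dotProduct, Matrix.sub_apply, Matrix.smul_apply,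
        Matrix.of_apply, smul_eq_mul, mul_one, sub_mul, Finset.sum_sub_distrib, Finset.mul_sum]
      congr 1
      rw [← Finset.sum_sub_distrib, Finset.mul_sum]
    rw [h1, hmean s, mul_zero, sub_zero]
    have h2 : ∑ j, metropolisMatrix G i' j * (z s j k - m)
        = (∑ j, metropolisMatrix G i' j * z s j k) - m := by
      rw [Finset.sum_congr rfl fun j _ => mul_sub (metropolisMatrix G i' j) (z s j k) m,
        Finset.sum_sub_distrib, ← Finset.sum_mul, mm_rowsum, one_mul]
    rw [h2, hstep s i']
    ring
  -- perturbation bound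
  have hpert : ∀ s, ‖(EuclideanSpace.equiv (Fin M) ℝ).symm
      (fun i' => Lz * ((∑ j, metropolisMatrix G i' j * ev s j) - ev s i'))‖
      ≤ Real.sqrt M * c := by
    intro s
    refine euclid_norm_le_sqrt_mul _ hc0 ?_
    intro i'
    have h1 : (∑ j, metropolisMatrix G i' j * ev s j) - ev s i'
        = ∑ j, ((metropolisMatrix G - 1) i' j) * ev s j := by
      simp only [Matrix.sub_apply, Matrix.one_apply, sub_mul, Finset.sum_sub_distrib]
      congr 1
      rw [Finset.sum_congr rfl fun j _ => (ite_mul _ _ _ (ev s j) : _)]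
      simp [Finset.sum_ite_eq]
    have h2 : |∑ j, ((metropolisMatrix G - 1) i' j) * ev s j| ≤ nWI / 2 := by
      calc |∑ j, ((metropolisMatrix G - 1) i' j) * ev s j|
          ≤ ∑ j, |((metropolisMatrix G - 1) i' j) * ev s j| :=
            Finset.abs_sum_le_sum_abs _ _
        _ ≤ ∑ j, |(metropolisMatrix G - 1) i' j| * (1 / 2) := by
            refine Finset.sum_le_sum fun j _ => ?_
            rw [abs_mul]
            exact mul_le_mul_of_nonneg_left (hev2 s j) (abs_nonneg _)
        _ = (∑ j, |(metropolisMatrix G - 1) i' j|) * (1 / 2) := (Finset.sum_mul _ _ _).symm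
        _ ≤ nWI * (1 / 2) := by
            refine mul_le_mul_of_nonneg_right ?_ (by norm_num)
            rw [hnWI]
            exact Finset.le_sup' (fun i : Fin M => ∑ j : Fin M, |(metropolisMatrix G - 1) i j|)
              (Finset.mem_univ i')
        _ = nWI / 2 := by ring
    rw [h1, abs_mul, abs_of_pos hLz]
    calc Lz * |∑ j, ((metropolisMatrix G - 1) i' j) * ev s j|
        ≤ Lz * (nWI / 2) := mul_le_mul_of_nonneg_left h2 hLz.le
      _ = c := by rw [hc]; ring
  -- induction: ‖Y s‖ ≤ K
  have hbd : ∀ s, ‖Y s‖ ≤ K := by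
    intro s
    induction s with
    | zero =>
      have h1 : ‖Y 0‖ ≤ Real.sqrt M * zmax := by
        refine euclid_norm_le_sqrt_mul _ hzmax0 ?_
        intro j
        have h2 : |z 0 j k - m| ≤ ‖(fun k' => z 0 j k' - zavg k' : Fin p → ℝ)‖ := by
          have h3 := norm_le_pi_norm (fun k' => z 0 j k' - zavg k' : Fin p → ℝ) k
          rw [Real.norm_eq_abs] at h3
          rw [hm]
          exact h3
        calc |z 0 j k - m| ≤ ‖(fun k' => z 0 j k' - zavg k' : Fin p → ℝ)‖ := h2
          _ ≤ zmax := by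
              rw [hzmax]
              exact Finset.le_sup' (fun i : Fin M => ‖(fun k => z 0 i k - zavg k : Fin p → ℝ)‖)
                (Finset.mem_univ j)
      have h4 : 0 ≤ Real.sqrt M * c / (1 - lam) := by positivity
      rw [hK]; linarith
    | succ n ih =>
      have h1 := aux_mulVec_norm_le A hAsymm hlam0 hspec (fun j => z n j k - m)
      have h2 : ‖(EuclideanSpace.equiv (Fin M) ℝ).symm (fun j => z n j k - m)‖ = ‖Y n‖ := rfl
      rw [h2] at h1
      calc ‖Y (n + 1)‖
          ≤ ‖(EuclideanSpace.equiv (Fin M) ℝ).symm (A *ᵥ (fun j => z n j k - m))‖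
            + ‖(EuclideanSpace.equiv (Fin M) ℝ).symm
              (fun i' => Lz * ((∑ j, metropolisMatrix G i' j * ev n j) - ev n i'))‖ := by
            rw [hYrec n]; exact norm_add_le _ _
        _ ≤ lam * ‖Y n‖ + Real.sqrt M * c := add_le_add h1 (hpert n)
        _ ≤ lam * K + Real.sqrt M * c :=
            add_le_add_left (mul_le_mul_of_nonneg_left ih hlam0) _
        _ ≤ K := by
            have h5 : (1 - lam) * (Real.sqrt M * c / (1 - lam)) = Real.sqrt M * c := by
              field_simp
            have h6 : 0 ≤ (1 - lam) * (Real.sqrt M * zmax) :=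
              mul_nonneg hlamlt.le (mul_nonneg hsqrtM0 hzmax0)
            rw [hK]
            nlinarith
  -- coordinate bound
  have habs : ∀ s j, |z s j k| ≤ K + ‖zavg‖ := by
    intro s j
    have h1 : |z s j k - m| ≤ ‖Y s‖ := euclid_coord_le (Y s) j
    have h2 : |m| ≤ ‖zavg‖ := by
      have h3 := norm_le_pi_norm zavg k
      rw [Real.norm_eq_abs] at h3
      rw [hm]
      exact h3
    calc |z s j k| = |(z s j k - m) + m| := by ring_nf
      _ ≤ |z s j k - m| + |m| := abs_add_le _ _
      _ ≤ K + ‖zavg‖ := add_le_add (le_trans h1 (hbd s)) h2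
  -- quantization bound
  set R : ℝ := (K + ‖zavg‖) / Lz + 1 / 2 with hR
  have hR0 : 0 ≤ R := by rw [hR]; positivity
  have hQb : ∀ j, |Qv t j| ≤ R := by
    intro j
    have h1 : Qv t j = z t j k / Lz + ev t j := by rw [hev]; ring
    calc |Qv t j| = |z t j k / Lz + ev t j| := by rw [h1]
      _ ≤ |z t j k / Lz| + |ev t j| := abs_add_le _ _
      _ ≤ |z t j k| / Lz + 1 / 2 := by
          rw [abs_div, abs_of_pos hLz]
          exact add_le_add_right (hev2 t j) _
      _ ≤ (K + ‖zavg‖) / Lz + 1 / 2 := by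
          have h2 := habs t j
          gcongr
      _ = R := hR.symm
  -- degree sum bound
  have hdeg : ∑ j ∈ G.neighborFinset i, metropolisWeight G i j ≤ (M : ℝ) / 4 := by
    rcases Nat.eq_zero_or_pos (G.degree i) with h0 | hpos
    · have he : G.neighborFinset i = ∅ := Finset.card_eq_zero.mp h0
      rw [he, Finset.sum_empty]
      positivity
    · obtain ⟨j, hj⟩ := Finset.card_pos.mp hpos
      have hadj : G.Adj i j := (SimpleGraph.mem_neighborFinset G i j).mp hj
      have hne : i ≠ j := G.ne_of_adj hadj
      have hM2 : (2 : ℝ) ≤ (M : ℝ) := by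
        have h1 : 1 < M := by
          rw [← Fintype.card_fin M]
          exact Fintype.one_lt_card_iff_nontrivial.mpr ⟨⟨i, j, hne⟩⟩
        exact_mod_cast h1
      have hd0 : (0 : ℝ) ≤ (G.degree i : ℝ) := Nat.cast_nonneg _
      calc ∑ j' ∈ G.neighborFinset i, metropolisWeight G i j'
          ≤ ∑ _j' ∈ G.neighborFinset i, 1 / (2 * (1 + (G.degree i : ℝ))) :=
            Finset.sum_le_sum fun j' _ => mw_le G i j'
        _ = (G.degree i : ℝ) * (1 / (2 * (1 + (G.degree i : ℝ)))) := by
            rw [Finset.sum_const, nsmul_eq_mul]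
            rfl
        _ ≤ 1 / 2 := by
            rw [mul_one_div, div_le_div_iff₀ (by positivity) (by norm_num : (0:ℝ) < 2)]
            linarith
        _ ≤ (M : ℝ) / 4 := by linarith
  -- pull everything together
  set S : ℝ := 1 + (M : ℝ) * nWI / (1 - lam) + 2 * (Real.sqrt M * zmax + ‖zavg‖) / Lz with hS
  have h2R : 2 * R ≤ S := by
    have expand : 2 * R = 1 + Real.sqrt M * nWI / (1 - lam)
        + 2 * (Real.sqrt M * zmax + ‖zavg‖) / Lz := by
      rw [hR, hK, hc]
      field_simp
      ring
    have key : Real.sqrt M * nWI / (1 - lam) ≤ (M : ℝ) * nWI / (1 - lam) := by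
      gcongr
    rw [expand, hS]
    linarith
  have hq2 : ((M : ℝ) / 4) * S / Lw < (q : ℝ) / 2 := by
    have h1 : ((M : ℝ) / 4) * S / Lw * 2 = (M : ℝ) / (2 * Lw) * S := by
      ring
    linarith [hq, h1]
  have hfold2 : ∀ j, ((round (z t j k / Lz) : ℤ) : ℝ) = Qv t j := fun j => rfl
  calc |∑ j ∈ G.neighborFinset i, (metropolisWeight G i j / Lw) *
        ((round (z t j k / Lz) : ℝ) - (round (z t i k / Lz) : ℝ))|
      = |∑ j ∈ G.neighborFinset i, (metropolisWeight G i j / Lw) * (Qv t j - Qv t i)| := by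
        simp only [hfold2]
    _ ≤ ∑ j ∈ G.neighborFinset i, |(metropolisWeight G i j / Lw) * (Qv t j - Qv t i)| :=
        Finset.abs_sum_le_sum_abs _ _
    _ ≤ ∑ j ∈ G.neighborFinset i, (metropolisWeight G i j / Lw) * (2 * R) := by
        refine Finset.sum_le_sum fun j _ => ?_
        have hw0 : 0 ≤ metropolisWeight G i j / Lw := div_nonneg (mw_nonneg G i j) hLw.le
        rw [abs_mul, abs_of_nonneg hw0]
        refine mul_le_mul_of_nonneg_left ?_ hw0
        calc |Qv t j - Qv t i| ≤ |Qv t j| + |Qv t i| := abs_sub _ _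
          _ ≤ R + R := add_le_add (hQb j) (hQb i)
          _ = 2 * R := by ring
    _ = (∑ j ∈ G.neighborFinset i, metropolisWeight G i j) * (2 * R) / Lw := by
        rw [Finset.sum_mul, Finset.sum_div]
        exact Finset.sum_congr rfl fun j _ => by ring
    _ ≤ ((M : ℝ) / 4) * (2 * R) / Lw := by
        gcongr
    _ ≤ ((M : ℝ) / 4) * S / Lw := by
        gcongr
    _ < (q : ℝ) / 2 := hq2
end

section
/- If a masked update z_i(t+1) = z_i(t) + L_w·L_z·(φ_{ii}(t) + sum_{j∈N_i}(ζ_{ij}(t) - w̄_{ij}Q(z_i(t))) mod q) uses masked messages ζ_{ij}(t) = (w̄_{ij}Q(z_j(t)) + φ_{ij}(t)) mod q with masks satisfying φ_{ii}(t) + sum_{j∈N_i} φ_{ij}(t) ≡ 0 (mod q), and if ‖sum_{j∈N_i} w̄_{ij}(Q(z_j(t)) - Q(z_i(t)))‖_∞ < q/2, then the masked update coincides with the unmasked quantized update z_i(t+1) = z_i(t) + L_w·L_z·sum_{j∈N_i} w̄_{ij}(Q(z_j(t)) - Q(z_i(t))). -/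
open Finset

/-- Centered modulo: `a mod q := a - ⌊(a + q/2)/q⌋ · q`. -/
def cmod (q : ℕ) (a : ℤ) : ℤ := a - ⌊((a : ℚ) + q / 2) / q⌋ * q

lemma cmod_add_int_mul (q : ℕ) (hq : 0 < q) (a m : ℤ) :
    cmod q (a + m * q) = cmod q a := by
  unfold cmod
  have hq' : ((q : ℚ)) ≠ 0 := by positivity
  have h1 : ((a + m * q : ℤ) : ℚ) + q / 2 = ((a : ℚ) + q / 2) + m * q := by
    push_cast; ring
  rw [h1]
  have h2 : (((a : ℚ) + q / 2) + m * q) / q = ((a : ℚ) + q / 2) / q + m := by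
    field_simp
  rw [h2, Int.floor_add_intCast]
  push_cast; ring

lemma cmod_eq_self (q : ℕ) (hq : 0 < q) (a : ℤ)
    (h1 : -(q : ℚ) / 2 ≤ (a : ℚ)) (h2 : (a : ℚ) < (q : ℚ) / 2) :
    cmod q a = a := by
  unfold cmod
  have hqpos : (0 : ℚ) < q := by exact_mod_cast hq
  have hfl : ⌊((a : ℚ) + q / 2) / q⌋ = 0 := by
    apply Int.floor_eq_zero_iff.mpr
    constructor
    · apply div_nonneg _ hqpos.le
      linarith
    · rw [div_lt_one hqpos]
      linarith
  rw [hfl]; ring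

/-- If the masked update uses messages `ζ_{ij} = (w̄_{ij} Q(z_j) + φ_{ij}) mod q` with
masks in `Z_q^p` satisfying `φ_{ii} + ∑_{j∈N_i} φ_{ij} ≡ 0 (mod q)`, and the true
aggregate satisfies `‖∑_{j∈N_i} w̄_{ij}(Q(z_j) - Q(z_i))‖_∞ < q/2`, then the masked
update coincides with the unmasked quantized update. -/
theorem masked_update_correct {J : Type*} [DecidableEq J] (p q : ℕ) (hq : 0 < q)
    (N : Finset J) (Lw Lz : ℝ) (hLw : 0 < Lw) (hLz : 0 < Lz)
    (wbar : J → ℤ) (Qz : J → Fin p → ℤ) (Qzi : Fin p → ℤ)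
    (φ : J → Fin p → ℤ) (φii : Fin p → ℤ)
    (hφrange : ∀ j ∈ N, ∀ k, -(q : ℚ) / 2 ≤ (φ j k : ℚ) ∧ (φ j k : ℚ) < (q : ℚ) / 2)
    (hφiirange : ∀ k, -(q : ℚ) / 2 ≤ (φii k : ℚ) ∧ (φii k : ℚ) < (q : ℚ) / 2)
    (ζ : J → Fin p → ℤ)
    (hζ : ∀ j ∈ N, ∀ k, ζ j k = cmod q (wbar j * Qz j k + φ j k))
    (hmask : ∀ k, cmod q (φii k + ∑ j ∈ N, φ j k) = 0)
    (hbound : ∀ k, (|∑ j ∈ N, wbar j * (Qz j k - Qzi k)| : ℚ) < (q : ℚ) / 2)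
    (zi : Fin p → ℝ) :
    ∀ k, zi k + Lw * Lz *
        ((cmod q (φii k + ∑ j ∈ N, (ζ j k - wbar j * Qzi k)) : ℤ) : ℝ) =
      zi k + Lw * Lz * ((∑ j ∈ N, wbar j * (Qz j k - Qzi k) : ℤ) : ℝ) := by
  intro k
  have key : cmod q (φii k + ∑ j ∈ N, (ζ j k - wbar j * Qzi k)) =
      ∑ j ∈ N, wbar j * (Qz j k - Qzi k) := by
    have hζ' : ∀ j ∈ N, ∃ m : ℤ, ζ j k = wbar j * Qz j k + φ j k + m * q := by
      intro j hj
      refine ⟨-⌊(((wbar j * Qz j k + φ j k : ℤ) : ℚ) + q / 2) / q⌋, ?_⟩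
      rw [hζ j hj k]; unfold cmod; ring
    choose m hm using fun j (hj : j ∈ N) => hζ' j hj
    set M : ℤ := ⌊(((φii k + ∑ j ∈ N, φ j k : ℤ) : ℚ) + q / 2) / q⌋ with hMdef
    have hM : φii k + ∑ j ∈ N, φ j k = M * q := by
      have h0 := hmask k
      unfold cmod at h0
      rw [← hMdef] at h0
      linarith
    have hsum : φii k + ∑ j ∈ N, (ζ j k - wbar j * Qzi k) =
        (∑ j ∈ N, wbar j * (Qz j k - Qzi k)) + (M + ∑ j ∈ N.attach, m j j.2) * q := by
      have e1 : ∑ j ∈ N, (ζ j k - wbar j * Qzi k) =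
          ∑ j ∈ N.attach, (ζ j.1 k - wbar j.1 * Qzi k) :=
        (Finset.sum_attach _ _).symm
      have e2 : ∀ j ∈ N.attach, (ζ j.1 k - wbar j.1 * Qzi k) =
          wbar j.1 * (Qz j.1 k - Qzi k) + φ j.1 k + m j.1 j.2 * q := by
        intro j _
        rw [hm j.1 j.2]; ring
      have e3 : ∑ j ∈ N, wbar j * (Qz j k - Qzi k) =
          ∑ j ∈ N.attach, wbar j.1 * (Qz j.1 k - Qzi k) :=
        (Finset.sum_attach _ _).symm
      have e4 : ∑ j ∈ N, φ j k = ∑ j ∈ N.attach, φ j.1 k :=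
        (Finset.sum_attach _ _).symm
      rw [e1, Finset.sum_congr rfl e2, Finset.sum_add_distrib, Finset.sum_add_distrib,
        e3, ← e4]
      rw [e4] at hM
      rw [← Finset.sum_mul]
      linarith
    rw [hsum, cmod_add_int_mul q hq _ _]
    refine cmod_eq_self q hq _ ?_ ?_
    · have h := hbound k
      rw [abs_lt] at h
      push_cast
      push_cast at h
      linarith [h.1]
    · have h := hbound k
      rw [abs_lt] at h
      push_cast
      push_cast at h
      linarith [h.2]
  rw [key]
end
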